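/- Let f(z) = ∑_{n=0}^∞ a_n z^n be a power series with complex coefficients convergent on the open disk D(0,R) ⊂ ℂ with R > 0, and let f_a(z) := ∑_{n=0}^∞ |a_n| z^n. Let A, B be commuting bounded linear operators on a complex Hilbert space H. If ‖A‖² < R and ‖B‖² < R, then r(f(AB))² ≤ f_a(r(A)²) · f_a(r(B)²). -/

import Mathlib

/-!
Work in the double centralizer `S` of `{A, B}`: it is a closed commutative subalgebra, and by
Gelfand's formula the spectral radius of an element is the same in `S` as in `B(H)`. A point `z`
of the spectrum of `f(AB)` is `φ(f(AB)) = f(φ(A) φ(B))` for a character `φ` of `S`, and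
`|φ(A)| ≤ r(A)`, `|φ(B)| ≤ r(B)`. Hence
`|z| ≤ ∑ |aₙ| |φ(A)|ⁿ |φ(B)|ⁿ ≤ √(f_a(|φ(A)|²) f_a(|φ(B)|²)) ≤ √(f_a(r(A)²) f_a(r(B)²))`
by Cauchy–Schwarz and the monotonicity of `f_a` on `[0, R)`.
-/

open Filter
open scoped ENNReal

section PowerSeries

theorem summable_norm_mul_pow_of_lt {𝕜 : Type*} [RCLike 𝕜] {a : ℕ → 𝕜} {R : ℝ}
    (hconv : ∀ z : 𝕜, ‖z‖ < R → Summable fun n => a n * z ^ n)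
    {r : ℝ} (hr : 0 ≤ r) (hrR : r < R) : Summable fun n => ‖a n‖ * r ^ n := by
  obtain ⟨t, hrt, htR⟩ := exists_between hrR
  have ht : 0 ≤ t := hr.trans hrt.le
  set p := FormalMultilinearSeries.ofScalars 𝕜 a
  have hp (n : ℕ) : ‖p n‖ = ‖a n‖ := FormalMultilinearSeries.ofScalars_norm 𝕜 a n
  have htp : (t.toNNReal : ℝ≥0∞) ≤ p.radius := by
    refine p.le_radius_of_tendsto (l := 0) ?_
    have := (hconv t (by simpa [abs_of_nonneg ht] using htR)).tendsto_atTop_zero.norm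
    simpa [hp, abs_of_nonneg ht, Real.coe_toNNReal _ ht] using this
  have hrp : (r.toNNReal : ℝ≥0∞) < p.radius :=
    lt_of_lt_of_le (by simpa using ⟨hrt, hr.trans_lt hrt⟩) htp
  simpa [hp, Real.coe_toNNReal _ hr] using p.summable_norm_mul_pow hrp

variable {c : ℕ → ℝ}

theorem tsum_mul_pow_le_tsum_mul_pow (hc : ∀ n, 0 ≤ c n) {s t : ℝ} (hs : 0 ≤ s) (hst : s ≤ t)
    (ht : Summable fun n => c n * t ^ n) :
    ∑' n, c n * s ^ n ≤ ∑' n, c n * t ^ n := by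
  have hle (n : ℕ) : c n * s ^ n ≤ c n * t ^ n := by have := hc n; gcongr
  exact (ht.of_nonneg_of_le (fun n => by have := hc n; positivity) hle).tsum_le_tsum hle ht

theorem summable_and_tsum_mul_pow_mul_le_sqrt_mul_sqrt (hc : ∀ n, 0 ≤ c n) {s t : ℝ}
    (hs : 0 ≤ s) (ht : 0 ≤ t) (hs2 : Summable fun n => c n * (s ^ 2) ^ n)
    (ht2 : Summable fun n => c n * (t ^ 2) ^ n) :
    (Summable fun n => c n * (s * t) ^ n) ∧
      ∑' n, c n * (s * t) ^ n ≤ √(∑' n, c n * (s ^ 2) ^ n) * √(∑' n, c n * (t ^ 2) ^ n) := by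
  have hsq (x : ℝ) (n : ℕ) : (√(c n) * x ^ n) ^ (2 : ℝ) = c n * (x ^ 2) ^ n := by
    rw [Real.rpow_two, mul_pow, Real.sq_sqrt (hc n), ← pow_mul, ← pow_mul, mul_comm n]
  have hprod (n : ℕ) : √(c n) * s ^ n * (√(c n) * t ^ n) = c n * (s * t) ^ n := by
    rw [mul_mul_mul_comm, Real.mul_self_sqrt (hc n), mul_pow]
  have holder := Real.summable_and_inner_le_Lp_mul_Lq_tsum_of_nonneg .two_two
    (f := fun n => √(c n) * s ^ n) (g := fun n => √(c n) * t ^ n)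
    (fun n => by positivity) (fun n => by positivity)
    (by simpa only [hsq s] using hs2) (by simpa only [hsq t] using ht2)
  simpa only [hsq s, hsq t, hprod, ← Real.sqrt_eq_rpow] using holder

end PowerSeries

theorem toReal_spectralRadius_le_of_forall_norm_le {𝕜 A : Type*} [NormedField 𝕜] [Ring A]
    [Algebra 𝕜 A] {a : A} {t : ℝ} (ht : 0 ≤ t) (h : ∀ k ∈ spectrum 𝕜 a, ‖k‖ ≤ t) :
    (spectralRadius 𝕜 a).toReal ≤ t :=
  ENNReal.toReal_le_of_le_ofReal ht <| iSup₂_le fun k hk => by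
    rw [← ENNReal.ofReal_coe_nnreal, coe_nnnorm]
    exact ENNReal.ofReal_le_ofReal (h k hk)

section BanachAlgebra

variable {E : Type*} [NormedRing E] [NormedAlgebra ℂ E] [CompleteSpace E]

theorem Subalgebra.spectralRadius_coe (S : Subalgebra ℂ E) [CompleteSpace S] (x : S) :
    spectralRadius ℂ (x : E) = spectralRadius ℂ x := by
  refine tendsto_nhds_unique
    (spectrum.pow_nnnorm_pow_one_div_tendsto_nhds_spectralRadius (x : E)) ?_
  simp_rw [← SubmonoidClass.coe_pow]
  exact spectrum.pow_nnnorm_pow_one_div_tendsto_nhds_spectralRadius x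

theorem Commute.exists_hasSum_of_mem_spectrum {a b : E} (hab : Commute a b) {c : ℕ → ℂ} {w : E}
    (hw : HasSum (fun n => c n • (a * b) ^ n) w) {z : ℂ} (hz : z ∈ spectrum ℂ w) :
    ∃ u v : ℂ, (‖u‖₊ : ℝ≥0∞) ≤ spectralRadius ℂ a ∧ (‖v‖₊ : ℝ≥0∞) ≤ spectralRadius ℂ b ∧
      HasSum (fun n => c n * (u * v) ^ n) z := by
  set S := Subalgebra.centralizer ℂ (Set.centralizer ({a, b} : Set E))
  have hS : IsClosed (S : Set E) := Set.isClosed_centralizer _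
  have hab_mem : ({a, b} : Set E) ⊆ S := Set.subset_centralizer_centralizer
  let _ : NormedCommRing S :=
    { (inferInstance : NormedRing S) with
      mul_comm := fun x y => Subtype.ext <| Set.centralizer_centralizer_comm_of_comm
        (by rintro _ (rfl | rfl) _ (rfl | rfl) <;> first | rfl | exact hab.eq | exact hab.eq.symm)
        _ x.2 _ y.2 }
  have : CompleteSpace S := hS.completeSpace_coe
  set a' : S := ⟨a, hab_mem (by simp)⟩
  set b' : S := ⟨b, hab_mem (by simp)⟩
  have hwS : w ∈ S := hS.mem_of_tendsto hw (Eventually.of_forall fun s =>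
    S.sum_mem fun n _ => S.smul_mem (S.pow_mem (S.mul_mem a'.2 b'.2) n) _)
  have hw' : HasSum (fun n => c n • (a' * b') ^ n) ⟨w, hwS⟩ :=
    (Topology.IsInducing.subtypeVal.hasSum_iff (g := S.val) _ _).mp hw
  obtain ⟨φ, rfl⟩ := WeakDual.CharacterSpace.mem_spectrum_iff_exists.mp
    (spectrum.subset_subalgebra (⟨w, hwS⟩ : S) hz)
  refine ⟨φ a', φ b', ?_, ?_, by simpa [Function.comp_def] using hw'.map φ (map_continuous φ)⟩
  · rw [show a = (a' : E) from rfl, S.spectralRadius_coe a']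
    exact le_iSup₂ (α := ℝ≥0∞) _ (AlgHom.apply_mem_spectrum φ a')
  · rw [show b = (b' : E) from rfl, S.spectralRadius_coe b']
    exact le_iSup₂ (α := ℝ≥0∞) _ (AlgHom.apply_mem_spectrum φ b')

variable [NormOneClass E]

theorem toReal_spectralRadius_le_norm (x : E) : (spectralRadius ℂ x).toReal ≤ ‖x‖ := by
  simpa using ENNReal.toReal_mono ENNReal.coe_ne_top (spectrum.spectralRadius_le_nnnorm x)

theorem norm_le_toReal_spectralRadius {x : E} {u : ℂ}
    (hu : (‖u‖₊ : ℝ≥0∞) ≤ spectralRadius ℂ x) : ‖u‖ ≤ (spectralRadius ℂ x).toReal := by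
  simpa using ENNReal.toReal_mono
    ((spectrum.spectralRadius_le_nnnorm x).trans_lt ENNReal.coe_lt_top).ne hu

variable {c : ℕ → ℂ} {R : ℝ}

theorem summable_smul_pow_of_norm_lt (hconv : ∀ z : ℂ, ‖z‖ < R → Summable fun n => c n * z ^ n)
    {x : E} (hx : ‖x‖ < R) : Summable fun n => c n • x ^ n :=
  .of_norm_bounded (summable_norm_mul_pow_of_lt hconv (norm_nonneg x) hx) fun n =>
    (norm_smul_le _ _).trans (by gcongr; exact norm_pow_le x n)

theorem Commute.norm_le_of_mem_spectrum_tsum_smul_mul_pow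
    (hconv : ∀ z : ℂ, ‖z‖ < R → Summable fun n => c n * z ^ n) {a b : E} (hab : Commute a b)
    (ha : ‖a‖ ^ 2 < R) (hb : ‖b‖ ^ 2 < R) (hw : Summable fun n => c n • (a * b) ^ n)
    {z : ℂ} (hz : z ∈ spectrum ℂ (∑' n, c n • (a * b) ^ n)) :
    ‖z‖ ≤ √(∑' n, ‖c n‖ * ((spectralRadius ℂ a).toReal ^ 2) ^ n) *
      √(∑' n, ‖c n‖ * ((spectralRadius ℂ b).toReal ^ 2) ^ n) := by
  have summable_sq {x : E} (hx : ‖x‖ ^ 2 < R) {s : ℝ} (hs : 0 ≤ s) (hsx : s ≤ ‖x‖) :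
      Summable fun n => ‖c n‖ * (s ^ 2) ^ n :=
    summable_norm_mul_pow_of_lt hconv (by positivity) ((pow_le_pow_left₀ hs hsx 2).trans_lt hx)
  have mono {x : E} (hx : ‖x‖ ^ 2 < R) {s : ℝ} (hs : 0 ≤ s)
      (hsx : s ≤ (spectralRadius ℂ x).toReal) :
      ∑' n, ‖c n‖ * (s ^ 2) ^ n ≤ ∑' n, ‖c n‖ * ((spectralRadius ℂ x).toReal ^ 2) ^ n :=
    tsum_mul_pow_le_tsum_mul_pow (fun n => norm_nonneg _) (sq_nonneg s) (pow_le_pow_left₀ hs hsx 2)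
      (summable_sq hx ENNReal.toReal_nonneg (toReal_spectralRadius_le_norm x))
  obtain ⟨u, v, hu, hv, hz⟩ := hab.exists_hasSum_of_mem_spectrum hw.hasSum hz
  replace hu := norm_le_toReal_spectralRadius hu
  replace hv := norm_le_toReal_spectralRadius hv
  obtain ⟨huv, hle⟩ := summable_and_tsum_mul_pow_mul_le_sqrt_mul_sqrt (fun n => norm_nonneg (c n))
    (norm_nonneg u) (norm_nonneg v)
    (summable_sq ha (norm_nonneg u) (hu.trans (toReal_spectralRadius_le_norm a)))
    (summable_sq hb (norm_nonneg v) (hv.trans (toReal_spectralRadius_le_norm b)))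
  calc ‖z‖ ≤ ∑' n, ‖c n‖ * (‖u‖ * ‖v‖) ^ n :=
        hz.norm_le_of_bounded huv.hasSum fun n => by simp [norm_pow]
    _ ≤ √(∑' n, ‖c n‖ * (‖u‖ ^ 2) ^ n) * √(∑' n, ‖c n‖ * (‖v‖ ^ 2) ^ n) := hle
    _ ≤ _ := by gcongr √?_ * √?_; exacts [mono ha (norm_nonneg u) hu, mono hb (norm_nonneg v) hv]

theorem sq_toReal_spectralRadius_tsum_smul_mul_pow_le
    (hconv : ∀ z : ℂ, ‖z‖ < R → Summable fun n => c n * z ^ n) {a b : E} (hab : Commute a b)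
    (ha : ‖a‖ ^ 2 < R) (hb : ‖b‖ ^ 2 < R) :
    (spectralRadius ℂ (∑' n, c n • (a * b) ^ n)).toReal ^ 2 ≤
      (∑' n, ‖c n‖ * ((spectralRadius ℂ a).toReal ^ 2) ^ n) *
        (∑' n, ‖c n‖ * ((spectralRadius ℂ b).toReal ^ 2) ^ n) := by
  have hab_lt : ‖a * b‖ < R := by nlinarith [norm_mul_le a b, two_mul_le_add_sq ‖a‖ ‖b‖]
  have hw := summable_smul_pow_of_norm_lt hconv hab_lt
  calc _ ≤ (√(∑' n, ‖c n‖ * ((spectralRadius ℂ a).toReal ^ 2) ^ n) *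
        √(∑' n, ‖c n‖ * ((spectralRadius ℂ b).toReal ^ 2) ^ n)) ^ 2 := by
        gcongr
        exact toReal_spectralRadius_le_of_forall_norm_le (by positivity) fun z hz =>
          hab.norm_le_of_mem_spectrum_tsum_smul_mul_pow hconv ha hb hw hz
    _ = _ := by
        rw [mul_pow, Real.sq_sqrt (tsum_nonneg fun n => by positivity),
          Real.sq_sqrt (tsum_nonneg fun n => by positivity)]

end BanachAlgebra

theorem sq_spectralRadius_powerSeries_mul_le_general
    {H : Type*} [NormedAddCommGroup H] [InnerProductSpace ℂ H] [CompleteSpace H]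
    (a : ℕ → ℂ) (R : ℝ)
    (hconv : ∀ z : ℂ, ‖z‖ < R → Summable fun n : ℕ => a n * z ^ n)
    (A B : H →L[ℂ] H) (hcomm : A * B = B * A)
    (hA : ‖A‖ ^ 2 < R) (hB : ‖B‖ ^ 2 < R) :
    (spectralRadius ℂ (∑' n : ℕ, a n • (A * B) ^ n)).toReal ^ 2 ≤
      (∑' n : ℕ, ‖a n‖ * ((spectralRadius ℂ A).toReal ^ 2) ^ n) *
        (∑' n : ℕ, ‖a n‖ * ((spectralRadius ℂ B).toReal ^ 2) ^ n) := by
  rcases subsingleton_or_nontrivial H with hH | hH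
  · simp only [spectrum.SpectralRadius.of_subsingleton, ENNReal.toReal_zero, zero_pow two_ne_zero]
    positivity
  · exact sq_toReal_spectralRadius_tsum_smul_mul_pow_le hconv hcomm hA hB

/-- For commuting `A`, `B` with `‖A‖² < R`, `‖B‖² < R`, one has
`r(f(AB))² ≤ f_a(r(A)²) · f_a(r(B)²)`. -/
theorem sq_spectralRadius_powerSeries_mul_le
    {H : Type*} [NormedAddCommGroup H] [InnerProductSpace ℂ H] [CompleteSpace H]
    (a : ℕ → ℂ) (R : ℝ) (hR : 0 < R)
    (hconv : ∀ z : ℂ, ‖z‖ < R → Summable fun n : ℕ => a n * z ^ n)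
    (A B : H →L[ℂ] H) (hcomm : A * B = B * A)
    (hA : ‖A‖ ^ 2 < R) (hB : ‖B‖ ^ 2 < R) :
    (spectralRadius ℂ (∑' n : ℕ, a n • (A * B) ^ n)).toReal ^ 2 ≤
      (∑' n : ℕ, ‖a n‖ * ((spectralRadius ℂ A).toReal ^ 2) ^ n) *
        (∑' n : ℕ, ‖a n‖ * ((spectralRadius ℂ B).toReal ^ 2) ^ n) :=
  sq_spectralRadius_powerSeries_mul_le_general a R hconv A B hcomm hA hB
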